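/- For every γ ∈ (0,1) and every λ > 0 there exists a function G : [0,1] → ℝ which is continuous, monotone increasing and concave on [0,1], with G(0) = 0 and G(x) > 0 for x ∈ (0,1], together with a strictly decreasing sequence (x_n) in (0,1) converging to 0 such that λ·x_n·G(x_n)·(−log x_n) ∈ (0,1] for every n and G(λ·x_n·G(x_n)·(−log x_n)) / G(x_n) ≥ (1/2)·log(−log x_n) for every n. In particular, limsup_{x→0⁺} G(λ·x·G(x)·(−log x)) / G(x) = ∞. -/

import Mathlib

/-!
Write `L = log (-log x)`, i.e. `x = exp (-exp L)`. If `G x = L / (lam * exp L)`, then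
`lam * x * G x * (-log x) = L * x`, and giving the point `L * x` the value `(L / 2) * G x` makes
the ratio in the theorem exactly `L / 2 = (1 / 2) * log (-log x)`. Along the scales
`L = 2 ^ (n + 3)` consecutive blocks `[x, L * x]` are so far apart
(`exp (-exp (2 * L)) = exp (-(exp L) ^ 2)`) that the chord slopes of the vertex sequence
`…, (x, G x), (L * x, (L / 2) * G x), …` increase as the vertices approach `0`. The infimum of
the chord lines is then a concave increasing interpolation of these vertices, and it vanishes
at `0` because the vertex values do.
-/

open Real Filter Set Topology

noncomputable section

namespace LossModulus

section Polygon

variable (p q : ℕ → ℝ)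

def chordSlope : ℕ → ℝ
  | 0 => 0
  | k + 1 => (q k - q (k + 1)) / (p k - p (k + 1))

def chordLine (k : ℕ) (t : ℝ) : ℝ := q k + chordSlope p q k * (t - p k)

/-- When `p` is strictly decreasing and `chordSlope p q` is monotone, this is the concave
piecewise linear interpolation of the vertices `(p k, q k)`, equal to `q 0` right of `p 0`. -/
def polygon (t : ℝ) : ℝ := ⨅ k, chordLine p q k t

variable {p q}

lemma chordLine_self (k : ℕ) : chordLine p q k (p k) = q k := by
  simp [chordLine]

lemma chordLine_succ_prev (hp : StrictAnti p) (k : ℕ) : chordLine p q (k + 1) (p k) = q k := by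
  have : p k - p (k + 1) ≠ 0 := sub_ne_zero.2 (hp k.lt_succ_self).ne'
  simp only [chordLine, chordSlope]
  field_simp
  ring

lemma chordLine_succ_sub (hp : StrictAnti p) (k : ℕ) (t : ℝ) :
    chordLine p q (k + 1) t - chordLine p q k t =
      (chordSlope p q (k + 1) - chordSlope p q k) * (t - p k) := by
  have h := chordLine_succ_prev (q := q) hp k
  unfold chordLine at h ⊢
  linear_combination h

lemma chordLine_succ_zero (hp : StrictAnti p) (k : ℕ) :
    chordLine p q (k + 1) 0 = q k - chordSlope p q (k + 1) * p k := by
  have h := chordLine_succ_prev (q := q) hp k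
  unfold chordLine at h ⊢
  linear_combination h

lemma chordSlope_nonneg (hs : Monotone (chordSlope p q)) (k : ℕ) : 0 ≤ chordSlope p q k :=
  hs k.zero_le

lemma chordLine_le_of_le (hp : StrictAnti p) (hs : Monotone (chordSlope p q)) {k j : ℕ}
    (hkj : k ≤ j) {t : ℝ} (ht : p k ≤ t) : chordLine p q k t ≤ chordLine p q j t := by
  induction j, hkj using Nat.le_induction with
  | base => rfl
  | succ j hkj ih =>
    have : 0 ≤ (chordSlope p q (j + 1) - chordSlope p q j) * (t - p j) :=
      mul_nonneg (sub_nonneg.2 (hs j.le_succ)) (sub_nonneg.2 ((hp.antitone hkj).trans ht))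
    linarith [chordLine_succ_sub (q := q) hp j t]

lemma chordLine_le_of_ge (hp : StrictAnti p) (hs : Monotone (chordSlope p q)) {j k : ℕ}
    (hjk : j ≤ k) {t : ℝ} (ht : t ≤ p k) : chordLine p q k t ≤ chordLine p q j t := by
  induction k, hjk using Nat.le_induction with
  | base => rfl
  | succ k hjk ih =>
    have htk : t ≤ p k := ht.trans (hp.antitone k.le_succ)
    have : (chordSlope p q (k + 1) - chordSlope p q k) * (t - p k) ≤ 0 :=
      mul_nonpos_of_nonneg_of_nonpos (sub_nonneg.2 (hs k.le_succ)) (sub_nonpos.2 htk)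
    linarith [ih htk, chordLine_succ_sub (q := q) hp k t]

lemma le_chordLine_vertex (hp : StrictAnti p) (hs : Monotone (chordSlope p q)) (j k : ℕ) :
    q k ≤ chordLine p q j (p k) := by
  rcases le_total k j with h | h
  · simpa only [chordLine_self] using chordLine_le_of_le hp hs h le_rfl
  · simpa only [chordLine_self] using chordLine_le_of_ge hp hs h le_rfl

lemma polygon_vertex (hp : StrictAnti p) (hs : Monotone (chordSlope p q)) (k : ℕ) :
    polygon p q (p k) = q k := by
  have hbdd : BddBelow (range fun j => chordLine p q j (p k)) := by
    refine ⟨q k, ?_⟩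
    rintro _ ⟨j, rfl⟩
    exact le_chordLine_vertex hp hs j k
  exact le_antisymm ((ciInf_le hbdd k).trans_eq (chordLine_self k))
    (le_ciInf fun j => le_chordLine_vertex hp hs j k)

lemma monotone_chordLine (hs : Monotone (chordSlope p q)) (k : ℕ) :
    Monotone (chordLine p q k) := fun _ _ htu => by
  have := chordSlope_nonneg hs k
  unfold chordLine
  gcongr

lemma chordLine_nonneg (hs : Monotone (chordSlope p q)) (hint : ∀ k, 0 ≤ chordLine p q k 0)
    (k : ℕ) {t : ℝ} (ht : 0 ≤ t) : 0 ≤ chordLine p q k t := by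
  have := mul_nonneg (chordSlope_nonneg hs k) ht
  have := hint k
  unfold chordLine at *
  linarith

lemma polygon_le_chordLine (hs : Monotone (chordSlope p q)) (hint : ∀ k, 0 ≤ chordLine p q k 0)
    {t : ℝ} (ht : 0 ≤ t) (k : ℕ) : polygon p q t ≤ chordLine p q k t :=
  ciInf_le ⟨0, by rintro _ ⟨j, rfl⟩; exact chordLine_nonneg hs hint j ht⟩ k

lemma polygon_nonneg (hs : Monotone (chordSlope p q)) (hint : ∀ k, 0 ≤ chordLine p q k 0)
    {t : ℝ} (ht : 0 ≤ t) : 0 ≤ polygon p q t :=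
  le_ciInf fun k => chordLine_nonneg hs hint k ht

lemma monotoneOn_polygon (hs : Monotone (chordSlope p q)) (hint : ∀ k, 0 ≤ chordLine p q k 0) :
    MonotoneOn (polygon p q) (Ici 0) :=
  fun _ ht _ _ htu => le_ciInf fun k =>
    (polygon_le_chordLine hs hint ht k).trans (monotone_chordLine hs k htu)

lemma concaveOn_polygon (hs : Monotone (chordSlope p q)) (hint : ∀ k, 0 ≤ chordLine p q k 0) :
    ConcaveOn ℝ (Ici 0) (polygon p q) := by
  refine ⟨convex_Ici 0, fun u hu v hv a b ha hb hab => le_ciInf fun k => ?_⟩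
  have hline : chordLine p q k (a • u + b • v) =
      a * chordLine p q k u + b * chordLine p q k v := by
    simp only [chordLine, smul_eq_mul]
    linear_combination (chordSlope p q k * p k - q k) * hab
  rw [hline, smul_eq_mul, smul_eq_mul]
  gcongr
  · exact polygon_le_chordLine hs hint hu k
  · exact polygon_le_chordLine hs hint hv k

lemma polygon_zero (hp : StrictAnti p) (hp0 : Tendsto p atTop (𝓝 0))
    (hs : Monotone (chordSlope p q)) (hint : ∀ k, 0 ≤ chordLine p q k 0)
    (hq0 : Tendsto q atTop (𝓝 0)) : polygon p q 0 = 0 := by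
  refine le_antisymm (ge_of_tendsto' hq0 fun k => ?_) (polygon_nonneg hs hint le_rfl)
  have hpk : 0 ≤ p k := hp.antitone.le_of_tendsto hp0 k
  rw [← polygon_vertex hp hs k]
  exact monotoneOn_polygon hs hint self_mem_Ici hpk hpk

lemma polygon_pos (hp : StrictAnti p) (hp0 : Tendsto p atTop (𝓝 0))
    (hs : Monotone (chordSlope p q)) (hint : ∀ k, 0 ≤ chordLine p q k 0) (hq : ∀ k, 0 < q k)
    {t : ℝ} (ht : 0 < t) : 0 < polygon p q t := by
  obtain ⟨k, hk⟩ := (hp0.eventually (gt_mem_nhds ht)).exists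
  calc 0 < q k := hq k
    _ = polygon p q (p k) := (polygon_vertex hp hs k).symm
    _ ≤ polygon p q t :=
      monotoneOn_polygon hs hint (hp.antitone.le_of_tendsto hp0 k) ht.le hk.le

lemma continuousOn_polygon (hp : StrictAnti p) (hp0 : Tendsto p atTop (𝓝 0))
    (hs : Monotone (chordSlope p q)) (hint : ∀ k, 0 ≤ chordLine p q k 0) (hq : ∀ k, 0 < q k)
    (hq0 : Tendsto q atTop (𝓝 0)) : ContinuousOn (polygon p q) (Ici 0) := by
  intro t ht
  rcases (mem_Ici.1 ht).eq_or_lt with rfl | ht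
  · -- a monotone function whose values `q k` decrease to its value `0` at `0`
    refine continuousWithinAt_right_of_monotoneOn_of_exists_between (monotoneOn_polygon hs hint)
      self_mem_nhdsWithin fun b hb => ?_
    rw [polygon_zero hp hp0 hs hint hq0] at hb ⊢
    obtain ⟨k, hk⟩ := (hq0.eventually (gt_mem_nhds hb)).exists
    exact ⟨p k, hp.antitone.le_of_tendsto hp0 k, by
      rw [polygon_vertex hp hs k]; exact ⟨hq k, hk⟩⟩
  · have := (concaveOn_polygon hs hint).continuousOn_interior t (by rwa [interior_Ici])
    exact (this.continuousAt (by rw [interior_Ici]; exact Ioi_mem_nhds ht)).continuousWithinAt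

lemma antitone_of_monotone_chordSlope (hp : StrictAnti p) (hs : Monotone (chordSlope p q)) :
    Antitone q := by
  refine antitone_nat_of_succ_le fun k => ?_
  have h := chordLine_succ_prev (q := q) hp k
  have := mul_nonneg (chordSlope_nonneg hs (k + 1)) (sub_nonneg.2 (hp k.lt_succ_self).le)
  unfold chordLine at h
  linarith

end Polygon

section Blocks

variable {lam L : ℝ}

def lowPt (L : ℝ) : ℝ := exp (-exp L)

def highPt (L : ℝ) : ℝ := L * lowPt L

def lowVal (lam L : ℝ) : ℝ := L / (lam * exp L)

def highVal (lam L : ℝ) : ℝ := L / 2 * lowVal lam L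

def blockSlope (lam L : ℝ) : ℝ := (highVal lam L - lowVal lam L) / (highPt L - lowPt L)

def gapSlope (lam L : ℝ) : ℝ :=
  (lowVal lam L - highVal lam (2 * L)) / (lowPt L - highPt (2 * L))

lemma lowPt_pos (L : ℝ) : 0 < lowPt L := exp_pos _

lemma neg_log_lowPt (L : ℝ) : -log (lowPt L) = exp L := by
  simp [lowPt]

lemma lowPt_two_mul (L : ℝ) : lowPt (2 * L) = exp (-exp L ^ 2) := by
  rw [lowPt, two_mul, exp_add, sq]

lemma lowPt_lt_one (L : ℝ) : lowPt L < 1 :=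
  exp_lt_one_iff.2 (neg_neg_of_pos (exp_pos L))

lemma highPt_pos (hL : 0 < L) : 0 < highPt L :=
  mul_pos hL (lowPt_pos L)

lemma highPt_le_one (L : ℝ) : highPt L ≤ 1 := by
  have h : L ≤ exp (exp L) := by linarith [add_one_le_exp L, add_one_le_exp (exp L)]
  calc highPt L = L * (exp (exp L))⁻¹ := by rw [highPt, lowPt, exp_neg]
    _ ≤ 1 := mul_inv_le_one_of_le₀ h (exp_pos _).le

lemma tendsto_lowPt : Tendsto lowPt atTop (𝓝 0) :=
  tendsto_exp_atBot.comp (tendsto_neg_atTop_atBot.comp tendsto_exp_atTop)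

lemma tendsto_lowVal (lam : ℝ) : Tendsto (lowVal lam) atTop (𝓝 0) := by
  have h : lowVal lam = fun L => L ^ 1 * exp (-L) / lam := by
    ext L; rw [lowVal, exp_neg, pow_one, div_eq_mul_inv, div_eq_mul_inv, mul_inv]; ring
  simpa [h] using (tendsto_pow_mul_exp_neg_atTop_nhds_zero 1).div_const lam

lemma lowVal_pos (hlam : 0 < lam) (hL : 0 < L) : 0 < lowVal lam L := by
  unfold lowVal; positivity

lemma exp_mul_lowVal_two_mul (L : ℝ) : exp L * lowVal lam (2 * L) = 2 * lowVal lam L := by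
  rw [lowVal, lowVal, two_mul, exp_add]
  field_simp
  ring

lemma highVal_two_mul (L : ℝ) : highVal lam (2 * L) = L * lowVal lam (2 * L) := by
  rw [highVal]; ring

lemma lam_mul_lowPt_mul_lowVal_mul_neg_log (hlam : 0 < lam) (L : ℝ) :
    lam * lowPt L * lowVal lam L * -log (lowPt L) = highPt L := by
  rw [neg_log_lowPt, lowVal, highPt]
  field_simp

lemma four_mul_le_exp {t : ℝ} (ht : 8 ≤ t) : 4 * t ≤ exp t := by
  have := pow_div_factorial_le_exp t (by linarith) 2
  norm_num [Nat.factorial] at this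
  nlinarith

lemma four_exp_mul_lowPt_two_mul_le (hL : 8 ≤ L) : 4 * exp L * lowPt (2 * L) ≤ lowPt L := by
  have hE : 8 ≤ exp L := hL.trans (by linarith [add_one_le_exp L])
  have : 4 * exp L ≤ exp (exp L ^ 2 - exp L) :=
    (four_mul_le_exp hE).trans (exp_le_exp.2 (by nlinarith))
  calc 4 * exp L * lowPt (2 * L) = 4 * exp L * exp (-exp L ^ 2) := by rw [lowPt_two_mul]
    _ ≤ exp (exp L ^ 2 - exp L) * exp (-exp L ^ 2) := by gcongr
    _ = lowPt L := by rw [← exp_add, lowPt]; ring_nf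

lemma lowPt_lt_highPt (hL : 1 < L) : lowPt L < highPt L :=
  lt_mul_left (lowPt_pos L) hL

lemma highPt_two_mul_lt (hL : 8 ≤ L) : highPt (2 * L) < lowPt L := by
  have := four_exp_mul_lowPt_two_mul_le hL
  have := add_one_le_exp L
  have := lowPt_pos (2 * L)
  rw [highPt]
  nlinarith

lemma highVal_two_mul_le (hlam : 0 < lam) (hL : 8 ≤ L) :
    highVal lam (2 * L) ≤ lowVal lam L / 2 := by
  have h4 := four_mul_le_exp hL
  have hy := lowVal_pos hlam (by linarith : 0 < L)
  refine le_of_mul_le_mul_left ?_ (exp_pos L)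
  calc exp L * highVal lam (2 * L) = 2 * L * lowVal lam L := by
        rw [highVal_two_mul, mul_left_comm, exp_mul_lowVal_two_mul]; ring
    _ ≤ exp L * (lowVal lam L / 2) := by nlinarith

lemma highVal_sub_lowVal (lam L : ℝ) :
    highVal lam L - lowVal lam L = (L / 2 - 1) * lowVal lam L := by
  rw [highVal]; ring

lemma highPt_sub_lowPt (L : ℝ) : highPt L - lowPt L = (L - 1) * lowPt L := by
  rw [highPt]; ring

lemma blockSlope_le (hlam : 0 < lam) (hL : 1 < L) :
    blockSlope lam L ≤ lowVal lam L / (2 * lowPt L) := by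
  have := mul_pos (lowVal_pos hlam (by linarith : 0 < L)) (lowPt_pos L)
  rw [blockSlope, highVal_sub_lowVal, highPt_sub_lowPt,
    div_le_div_iff₀ (mul_pos (by linarith) (lowPt_pos L)) (by linarith [lowPt_pos L])]
  nlinarith

lemma le_blockSlope (hlam : 0 < lam) (hL : 3 ≤ L) :
    lowVal lam L / (4 * lowPt L) ≤ blockSlope lam L := by
  have := mul_pos (lowVal_pos hlam (by linarith : 0 < L)) (lowPt_pos L)
  rw [blockSlope, highVal_sub_lowVal, highPt_sub_lowPt,
    div_le_div_iff₀ (by linarith [lowPt_pos L]) (mul_pos (by linarith) (lowPt_pos L))]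
  nlinarith

lemma le_gapSlope (hlam : 0 < lam) (hL : 8 ≤ L) :
    lowVal lam L / (2 * lowPt L) ≤ gapSlope lam L := by
  have := highVal_two_mul_le hlam hL
  have := mul_pos (lowVal_pos hlam (by linarith : 0 < L)) (lowPt_pos (2 * L))
  have := mul_pos (lowVal_pos hlam (by linarith : 0 < L)) (lowPt_pos L)
  rw [gapSlope, div_le_div_iff₀ (by linarith [lowPt_pos L])
    (by linarith [highPt_two_mul_lt hL]), highPt]
  nlinarith [lowPt_pos L]

lemma gapSlope_le (hlam : 0 < lam) (hL : 8 ≤ L) :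
    gapSlope lam L ≤ lowVal lam L / lowPt L := by
  have hx := four_exp_mul_lowPt_two_mul_le hL
  have hy : lowVal lam L = exp L * lowVal lam (2 * L) / 2 := by
    linarith [exp_mul_lowVal_two_mul (lam := lam) L]
  have := lowVal_pos hlam (by linarith : 0 < 2 * L)
  have := lowPt_pos (2 * L)
  rw [gapSlope, div_le_div_iff₀ (by linarith [highPt_two_mul_lt hL]) (lowPt_pos L),
    highVal_two_mul, highPt, hy]
  have hEx : exp L * lowPt (2 * L) ≤ lowPt L := by nlinarith [exp_pos L]
  nlinarith [mul_le_mul_of_nonneg_left hEx (by positivity : 0 ≤ L * lowVal lam (2 * L))]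

lemma lowVal_div_lowPt_le (hlam : 0 < lam) (hL : 8 ≤ L) :
    lowVal lam L / lowPt L ≤ lowVal lam (2 * L) / (4 * lowPt (2 * L)) := by
  have hx := four_exp_mul_lowPt_two_mul_le hL
  have hy : lowVal lam L = exp L * lowVal lam (2 * L) / 2 := by
    linarith [exp_mul_lowVal_two_mul (lam := lam) L]
  have := lowVal_pos hlam (by linarith : 0 < 2 * L)
  have := lowPt_pos (2 * L)
  rw [div_le_div_iff₀ (lowPt_pos L) (by positivity), hy]
  have : 0 ≤ lowVal lam (2 * L) * exp L * lowPt (2 * L) := by positivity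
  nlinarith [mul_le_mul_of_nonneg_left hx (lowVal_pos hlam (by linarith : 0 < 2 * L)).le]

lemma blockSlope_mul_highPt_le (hlam : 0 < lam) (hL : 1 < L) :
    blockSlope lam L * highPt L ≤ highVal lam L := by
  have h := blockSlope_le hlam hL
  rw [le_div_iff₀ (by linarith [lowPt_pos L])] at h
  rw [highPt, highVal]
  nlinarith

lemma gapSlope_mul_lowPt_le (hlam : 0 < lam) (hL : 8 ≤ L) :
    gapSlope lam L * lowPt L ≤ lowVal lam L :=
  (le_div_iff₀ (lowPt_pos L)).1 (gapSlope_le hlam hL)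

lemma blockSlope_le_gapSlope (hlam : 0 < lam) (hL : 8 ≤ L) :
    blockSlope lam L ≤ gapSlope lam L :=
  (blockSlope_le hlam (by linarith)).trans (le_gapSlope hlam hL)

lemma gapSlope_le_blockSlope_two_mul (hlam : 0 < lam) (hL : 8 ≤ L) :
    gapSlope lam L ≤ blockSlope lam (2 * L) :=
  ((gapSlope_le hlam hL).trans (lowVal_div_lowPt_le hlam hL)).trans
    (le_blockSlope hlam (by linarith))

end Blocks

section Vertices

def interleave {α : Type*} (a b : ℕ → α) (k : ℕ) : α :=
  if Even k then a (k / 2) else b (k / 2)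

@[simp] lemma interleave_two_mul {α : Type*} (a b : ℕ → α) (n : ℕ) :
    interleave a b (2 * n) = a n := by
  simp [interleave]

@[simp] lemma interleave_two_mul_add_one {α : Type*} (a b : ℕ → α) (n : ℕ) :
    interleave a b (2 * n + 1) = b n := by
  simp [interleave, Nat.add_div_of_dvd_right]

def scale (n : ℕ) : ℝ := 2 ^ (n + 3)

lemma scale_succ (n : ℕ) : scale (n + 1) = 2 * scale n := by
  rw [scale, scale, pow_succ]; ring

lemma eight_le_scale (n : ℕ) : 8 ≤ scale n := by
  rw [scale, pow_add]
  norm_num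
  exact one_le_pow₀ one_le_two

lemma scale_pos (n : ℕ) : 0 < scale n := by
  linarith [eight_le_scale n]

lemma tendsto_scale : Tendsto scale atTop atTop :=
  (tendsto_pow_atTop_atTop_of_one_lt one_lt_two).comp (tendsto_add_atTop_nat 3)

def vertexPt : ℕ → ℝ := interleave (fun n => highPt (scale n)) (fun n => lowPt (scale n))

def vertexVal (lam : ℝ) : ℕ → ℝ :=
  interleave (fun n => highVal lam (scale n)) (fun n => lowVal lam (scale n))

variable {lam : ℝ}

lemma chordSlope_vertex_two_mul_add_one (n : ℕ) :
    chordSlope vertexPt (vertexVal lam) (2 * n + 1) = blockSlope lam (scale n) := by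
  simp [chordSlope, vertexPt, vertexVal, blockSlope]

lemma chordSlope_vertex_two_mul_add_two (n : ℕ) :
    chordSlope vertexPt (vertexVal lam) (2 * n + 2) = gapSlope lam (scale n) := by
  rw [show 2 * n + 2 = 2 * n + 1 + 1 from rfl, chordSlope,
    show 2 * n + 1 + 1 = 2 * (n + 1) by ring]
  simp [vertexPt, vertexVal, gapSlope, scale_succ]

lemma strictAnti_vertexPt : StrictAnti vertexPt := by
  refine strictAnti_nat_of_succ_lt fun k => ?_
  obtain ⟨n, rfl | rfl⟩ := Nat.even_or_odd' k
  · simpa [vertexPt] using lowPt_lt_highPt (by linarith [eight_le_scale n])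
  · rw [show 2 * n + 1 + 1 = 2 * (n + 1) by ring]
    simpa [vertexPt, scale_succ] using highPt_two_mul_lt (eight_le_scale n)

lemma monotone_chordSlope_vertex (hlam : 0 < lam) :
    Monotone (chordSlope vertexPt (vertexVal lam)) := by
  refine monotone_nat_of_le_succ fun k => ?_
  obtain ⟨n, rfl | rfl⟩ := Nat.even_or_odd' k
  · cases n with
    | zero =>
      rw [chordSlope_vertex_two_mul_add_one]
      refine le_trans ?_ (le_blockSlope hlam (by linarith [eight_le_scale 0]))
      have hy := lowVal_pos hlam (scale_pos 0)
      have hx := lowPt_pos (scale 0)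
      positivity
    | succ n =>
      rw [show 2 * (n + 1) = 2 * n + 2 by ring, show 2 * n + 2 + 1 = 2 * (n + 1) + 1 by ring,
        chordSlope_vertex_two_mul_add_two, chordSlope_vertex_two_mul_add_one, scale_succ]
      exact gapSlope_le_blockSlope_two_mul hlam (eight_le_scale n)
  · rw [chordSlope_vertex_two_mul_add_one, chordSlope_vertex_two_mul_add_two]
    exact blockSlope_le_gapSlope hlam (eight_le_scale n)

lemma vertexVal_pos (hlam : 0 < lam) (k : ℕ) : 0 < vertexVal lam k := by
  obtain ⟨n, rfl | rfl⟩ := Nat.even_or_odd' k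
  · have := lowVal_pos hlam (scale_pos n)
    have := scale_pos n
    simp only [vertexVal, interleave_two_mul, highVal]
    positivity
  · simpa [vertexVal] using lowVal_pos hlam (scale_pos n)

lemma chordLine_vertex_zero_nonneg (hlam : 0 < lam) (k : ℕ) :
    0 ≤ chordLine vertexPt (vertexVal lam) k 0 := by
  cases k with
  | zero => simpa [chordLine, chordSlope] using (vertexVal_pos hlam 0).le
  | succ k =>
    rw [chordLine_succ_zero strictAnti_vertexPt, sub_nonneg]
    obtain ⟨n, rfl | rfl⟩ := Nat.even_or_odd' k
    · rw [chordSlope_vertex_two_mul_add_one]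
      simpa [vertexPt, vertexVal] using
        blockSlope_mul_highPt_le hlam (by linarith [eight_le_scale n])
    · rw [chordSlope_vertex_two_mul_add_two]
      simpa [vertexPt, vertexVal] using gapSlope_mul_lowPt_le hlam (eight_le_scale n)

lemma tendsto_two_mul_add_one : Tendsto (fun n : ℕ => 2 * n + 1) atTop atTop :=
  tendsto_atTop_mono (fun n => (by omega : n ≤ 2 * n + 1)) tendsto_id

lemma tendsto_vertexPt : Tendsto vertexPt atTop (𝓝 0) := by
  refine (tendsto_iff_tendsto_subseq_of_antitone strictAnti_vertexPt.antitone
    tendsto_two_mul_add_one).2 ?_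
  simpa [Function.comp_def, vertexPt] using tendsto_lowPt.comp tendsto_scale

lemma tendsto_vertexVal (hlam : 0 < lam) : Tendsto (vertexVal lam) atTop (𝓝 0) := by
  refine (tendsto_iff_tendsto_subseq_of_antitone
    (antitone_of_monotone_chordSlope strictAnti_vertexPt (monotone_chordSlope_vertex hlam))
    tendsto_two_mul_add_one).2 ?_
  simpa [Function.comp_def, vertexVal] using (tendsto_lowVal lam).comp tendsto_scale

lemma lam_mul_vertexPt_mul_vertexVal_mul_neg_log (hlam : 0 < lam) (n : ℕ) :
    lam * vertexPt (2 * n + 1) * vertexVal lam (2 * n + 1) * -log (vertexPt (2 * n + 1)) =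
      vertexPt (2 * n) := by
  simpa [vertexPt, vertexVal] using lam_mul_lowPt_mul_lowVal_mul_neg_log hlam (scale n)

lemma vertexVal_two_mul_div (hlam : 0 < lam) (n : ℕ) :
    vertexVal lam (2 * n) / vertexVal lam (2 * n + 1) = scale n / 2 := by
  simp [vertexVal, highVal, (lowVal_pos hlam (scale_pos n)).ne']

lemma log_neg_log_vertexPt (n : ℕ) : log (-log (vertexPt (2 * n + 1))) = scale n := by
  simp [vertexPt, neg_log_lowPt]

end Vertices

end LossModulus

end

open LossModulus

theorem loss_modulus_construction_scaled_general (lam : ℝ) (hlam : 0 < lam) :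
    ∃ G : ℝ → ℝ,
      ContinuousOn G (Set.Icc 0 1) ∧
      MonotoneOn G (Set.Icc 0 1) ∧
      ConcaveOn ℝ (Set.Icc 0 1) G ∧
      G 0 = 0 ∧
      (∀ x ∈ Set.Ioc (0:ℝ) 1, 0 < G x) ∧
      (∃ x : ℕ → ℝ,
        StrictAnti x ∧
        (∀ n, x n ∈ Set.Ioo (0:ℝ) 1) ∧
        Filter.Tendsto x Filter.atTop (nhds 0) ∧
        (∀ n, lam * x n * G (x n) * (-Real.log (x n)) ∈ Set.Ioc (0:ℝ) 1) ∧
        (∀ n, (1/2) * Real.log (-Real.log (x n)) ≤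
            G (lam * x n * G (x n) * (-Real.log (x n))) / G (x n))) ∧
      (∀ M : ℝ, ∃ᶠ x in nhdsWithin 0 (Set.Ioi 0),
        M ≤ G (lam * x * G x * (-Real.log x)) / G x) := by
  have hp := strictAnti_vertexPt
  have hp0 := tendsto_vertexPt
  have hs := monotone_chordSlope_vertex hlam
  have hint := chordLine_vertex_zero_nonneg hlam
  have hq := vertexVal_pos hlam
  have hG := polygon_vertex hp hs
  set x : ℕ → ℝ := fun n => vertexPt (2 * n + 1)
  have harg (n : ℕ) : lam * x n * polygon vertexPt (vertexVal lam) (x n) * -log (x n) =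
      vertexPt (2 * n) := by
    rw [hG]; exact lam_mul_vertexPt_mul_vertexVal_mul_neg_log hlam n
  have hratio (n : ℕ) : polygon vertexPt (vertexVal lam) (vertexPt (2 * n)) /
      polygon vertexPt (vertexVal lam) (x n) = scale n / 2 := by
    rw [hG, hG]; exact vertexVal_two_mul_div hlam n
  have hx0 : Tendsto x atTop (𝓝[>] 0) :=
    tendsto_nhdsWithin_of_tendsto_nhds_of_eventually_within _ (hp0.comp tendsto_two_mul_add_one)
      (.of_forall fun n => by simpa [x, vertexPt] using lowPt_pos _)
  refine ⟨polygon vertexPt (vertexVal lam),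
    (continuousOn_polygon hp hp0 hs hint hq (tendsto_vertexVal hlam)).mono Icc_subset_Ici_self,
    (monotoneOn_polygon hs hint).mono Icc_subset_Ici_self,
    (concaveOn_polygon hs hint).subset Icc_subset_Ici_self (convex_Icc 0 1),
    polygon_zero hp hp0 hs hint (tendsto_vertexVal hlam),
    fun t ht => polygon_pos hp hp0 hs hint hq ht.1,
    ⟨x, hp.comp_strictMono fun _ _ h => by omega, fun n => ?_, hx0.mono_right nhdsWithin_le_nhds,
      fun n => ?_, fun n => by rw [harg, hratio, log_neg_log_vertexPt]; linarith⟩, fun M => ?_⟩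
  · simpa [x, vertexPt] using ⟨lowPt_pos _, lowPt_lt_one _⟩
  · rw [harg]
    simpa [vertexPt] using ⟨highPt_pos (scale_pos n), highPt_le_one _⟩
  · refine hx0.frequently (Eventually.frequently ?_)
    filter_upwards [(tendsto_scale.atTop_div_const two_pos).eventually_ge_atTop M] with n hn
    rwa [harg, hratio]

/-- Corollary 4.2: rescaled version of Proposition 4.1 with parameter `λ > 0`. -/
theorem loss_modulus_construction_scaled (γ : ℝ) (hγ0 : 0 < γ) (hγ1 : γ < 1)
    (lam : ℝ) (hlam : 0 < lam) :
    ∃ G : ℝ → ℝ,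
      ContinuousOn G (Set.Icc 0 1) ∧
      MonotoneOn G (Set.Icc 0 1) ∧
      ConcaveOn ℝ (Set.Icc 0 1) G ∧
      G 0 = 0 ∧
      (∀ x ∈ Set.Ioc (0:ℝ) 1, 0 < G x) ∧
      (∃ x : ℕ → ℝ,
        StrictAnti x ∧
        (∀ n, x n ∈ Set.Ioo (0:ℝ) 1) ∧
        Filter.Tendsto x Filter.atTop (nhds 0) ∧
        (∀ n, lam * x n * G (x n) * (-Real.log (x n)) ∈ Set.Ioc (0:ℝ) 1) ∧
        (∀ n, (1/2) * Real.log (-Real.log (x n)) ≤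
            G (lam * x n * G (x n) * (-Real.log (x n))) / G (x n))) ∧
      (∀ M : ℝ, ∃ᶠ x in nhdsWithin 0 (Set.Ioi 0),
        M ≤ G (lam * x * G x * (-Real.log x)) / G x) :=
  loss_modulus_construction_scaled_general lam hlam
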